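/- Let X and Y be random variables on a finite probability space with joint pmf p(x,y), marginals p(x), and conditionals p(y|x). For any c > 0, the t-entropies satisfy the subadditivity property H_c(X,Y) ≤ H_c(X) + H_c(Y|X). -/

import Mathlib

open Real

/-- Joint t-entropy of a joint pmf `p : Fin n → Fin m → ℝ`. -/
noncomputable def tEntropyJoint {n m : ℕ} (c : ℝ) (p : Fin n → Fin m → ℝ) : ℝ :=
  (∑ i, ∑ j, p i j * Real.arctan ((p i j) ^ (-c))) - Real.pi / 4

/-- t-entropy of the first marginal of a joint pmf. -/
noncomputable def tEntropyMargX {n m : ℕ} (c : ℝ) (p : Fin n → Fin m → ℝ) : ℝ :=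
  (∑ i, (∑ j, p i j) * Real.arctan ((∑ j, p i j) ^ (-c))) - Real.pi / 4

/-- Conditional t-entropy `H_c(Y | X)` of a joint pmf, with `p(y|x) = p(x,y)/p(x)`
(zero-probability terms contributing 0). -/
noncomputable def tEntropyCondYX {n m : ℕ} (c : ℝ) (p : Fin n → Fin m → ℝ) : ℝ :=
  (∑ i, ∑ j, p i j * Real.arctan ((p i j / ∑ j', p i j') ^ (-c))) - Real.pi / 4

/-!
Substituting `u = p(x)^c` and `v = p(y|x)^c`, so that `uv = p(x,y)^c`, and using
`arctan w⁻¹ = π/2 - arctan w`, the termwise inequality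
`arctan (p(x,y)^{-c}) + π/4 ≤ arctan (p(x)^{-c}) + arctan (p(y|x)^{-c})` becomes
`arctan u + arctan v ≤ arctan 1 + arctan (uv)` for `u, v ∈ [0, 1]`. By the subtraction formula
for `arctan` this reduces to `(u - uv)/(1 + u²v) ≤ (1 - v)/(1 + v)`, i.e. to
`(1 - u)(1 - v)(1 - uv) ≥ 0`. Averaging against `p(x,y)` gives the theorem.
-/

lemma arctan_sub_arctan {x y : ℝ} (h : 0 ≤ x * y) :
    arctan x - arctan y = arctan ((x - y) / (1 + x * y)) := by
  rw [sub_eq_add_neg, ← arctan_neg, arctan_add (by nlinarith)]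
  congr 1
  ring

lemma arctan_add_arctan_le_pi_div_four_add_arctan_mul {u v : ℝ} (hu₀ : 0 ≤ u) (hu₁ : u ≤ 1)
    (hv₀ : 0 ≤ v) (hv₁ : v ≤ 1) :
    arctan u + arctan v ≤ π / 4 + arctan (u * v) := by
  have huv : u * v ≤ 1 := mul_le_one₀ hu₁ hv₀ hv₁
  have hdiff : (u - u * v) / (1 + u * (u * v)) ≤ (1 - v) / (1 + 1 * v) := by
    rw [div_le_div_iff₀ (by positivity) (by positivity)]
    nlinarith [mul_nonneg (mul_nonneg (sub_nonneg.2 hu₁) (sub_nonneg.2 hv₁)) (sub_nonneg.2 huv)]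
  have hmono := arctan_strictMono.monotone hdiff
  rw [← arctan_sub_arctan (by positivity), ← arctan_sub_arctan (by positivity),
    arctan_one] at hmono
  linarith

lemma arctan_rpow_neg_mul_add_pi_div_four_le {c s t : ℝ} (hc : 0 ≤ c) (hs₀ : 0 < s)
    (hs₁ : s ≤ 1) (ht₀ : 0 < t) (ht₁ : t ≤ 1) :
    arctan ((s * t) ^ (-c)) + π / 4 ≤ arctan (s ^ (-c)) + arctan (t ^ (-c)) := by
  have arctan_rpow_neg {x : ℝ} (hx : 0 < x) : arctan (x ^ (-c)) = π / 2 - arctan (x ^ c) := by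
    rw [rpow_neg hx.le, arctan_inv_of_pos (rpow_pos_of_pos hx c)]
  rw [arctan_rpow_neg (mul_pos hs₀ ht₀), arctan_rpow_neg hs₀, arctan_rpow_neg ht₀,
    mul_rpow hs₀.le ht₀.le]
  have := arctan_add_arctan_le_pi_div_four_add_arctan_mul (rpow_nonneg hs₀.le c)
    (rpow_le_one hs₀.le hs₁ hc) (rpow_nonneg ht₀.le c) (rpow_le_one ht₀.le ht₁ hc)
  linarith

lemma mul_arctan_rpow_neg_add_le {c a s : ℝ} (hc : 0 ≤ c) (ha : 0 ≤ a) (has : a ≤ s)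
    (hs : s ≤ 1) :
    a * arctan (a ^ (-c)) + a * (π / 4) ≤ a * arctan (s ^ (-c)) + a * arctan ((a / s) ^ (-c)) := by
  rcases ha.eq_or_lt with rfl | ha
  · simp
  have hs₀ : 0 < s := ha.trans_le has
  have key := arctan_rpow_neg_mul_add_pi_div_four_le hc hs₀ hs (div_pos ha hs₀)
    ((div_le_one hs₀).2 has)
  rw [mul_div_cancel₀ a hs₀.ne'] at key
  rw [← mul_add, ← mul_add]
  exact mul_le_mul_of_nonneg_left key ha.le

theorem tEntropy_subadditive {n m : ℕ} (c : ℝ) (hc : 0 < c)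
    (p : Fin n → Fin m → ℝ) (hp : ∀ i j, 0 ≤ p i j)
    (hsum : ∑ i, ∑ j, p i j = 1) :
    tEntropyJoint c p ≤ tEntropyMargX c p + tEntropyCondYX c p := by
  have hrow : ∀ i, ∑ j, p i j ≤ 1 := fun i =>
    hsum ▸ Finset.single_le_sum (fun i _ => Finset.sum_nonneg fun j _ => hp i j)
      (Finset.mem_univ i)
  have hterm : ∀ i j, p i j * arctan (p i j ^ (-c)) + p i j * (π / 4) ≤
      p i j * arctan ((∑ j', p i j') ^ (-c)) + p i j * arctan ((p i j / ∑ j', p i j') ^ (-c)) :=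
    fun i j => mul_arctan_rpow_neg_add_le hc.le (hp i j)
      (Finset.single_le_sum (fun j _ => hp i j) (Finset.mem_univ j)) (hrow i)
  have hsum_le := Finset.sum_le_sum fun i (_ : i ∈ Finset.univ) =>
    Finset.sum_le_sum fun j (_ : j ∈ Finset.univ) => hterm i j
  have hpi : ∑ i, ∑ j, p i j * (π / 4) = π / 4 := by
    simp_rw [← Finset.sum_mul, hsum, one_mul]
  simp only [Finset.sum_add_distrib, hpi] at hsum_le
  unfold tEntropyJoint tEntropyMargX tEntropyCondYX
  simp_rw [Finset.sum_mul]
  linarith
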